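/- Let H = H₀ ⊕ H₁ be an orthogonal decomposition of a finite-dimensional inner product space and let X be a self-adjoint linear operator on H with blocks Xᵢⱼ, such that X₁₁ ≥ 0 and ker X₁₁ ⊆ ker X₀₁. Then for every u ∈ H₀, ⟨u, (X₀₀ − X₀₁X₁₁⁺X₁₀)u⟩ equals the minimum over v ∈ H₁ of ⟨u + v, X(u + v)⟩ (these inner products are real), the set of minimizers is exactly { −X₁₁⁺X₁₀u + v₁ : v₁ ∈ ker X₁₁ }, and X₀₀ − X₀₁X₁₁⁺X₁₀ ≤ X₀₀. If moreover X ≥ 0, then 0 ≤ X₀₀ − X₀₁X₁₁⁺X₁₀ ≤ X₀₀. -/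

import Mathlib

/-!
Completing the square. Write `S = X₁₁` and `y = X₁₀ u`. The hypothesis `ker X₁₁ ⊆ ker X₀₁`
says `y ∈ ran S = (ker S)ᗮ`, so `w = S⁺ y` solves `S w = y` and lies in `H₁`. Then for `v ∈ H₁`
  `⟨u + v, X (u + v)⟩ = ⟨u, (X / X₁₁) u⟩ + ⟨v + w, S (v + w)⟩`,
and since `S ≥ 0` the last term is nonnegative and vanishes exactly when `v + w ∈ ker S`.
Taking `v = -w` gives `X / X₁₁ ≥ 0` when `X ≥ 0`, and `X / X₁₁ = X₀₀ - ⟨w, S w⟩ ≤ X₀₀`.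
-/

/-- The generalized Schur complement `X₀₀ - X₀₁ X₁₁⁺ X₁₀` of an operator `X` on
`H = H₀ ⊕ H₁` (orthogonal projections `P0, P1`), where `B` is the Moore–Penrose
pseudoinverse of the block `X₁₁ = P1 X P1`. -/
noncomputable def gschurLM {𝕂 : Type*} [RCLike 𝕂] {H : Type*} [NormedAddCommGroup H]
    [InnerProductSpace 𝕂 H] (P0 P1 X B : H →ₗ[𝕂] H) : H →ₗ[𝕂] H :=
  (P0 ∘ₗ (X ∘ₗ P0)) - (P0 ∘ₗ (X ∘ₗ P1)) ∘ₗ (B ∘ₗ (P1 ∘ₗ (X ∘ₗ P0)))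

open scoped InnerProductSpace

namespace LinearMap

variable {𝕂 E F G : Type*} [RCLike 𝕂]
  [NormedAddCommGroup E] [InnerProductSpace 𝕂 E]
  [NormedAddCommGroup F] [InnerProductSpace 𝕂 F]
  [NormedAddCommGroup G] [InnerProductSpace 𝕂 G]

theorem IsSymmetric.re_inner_add_apply_add {T : E →ₗ[𝕂] E} (hT : T.IsSymmetric) (a b : E) :
    RCLike.re ⟪a + b, T (a + b)⟫_𝕂 =
      RCLike.re ⟪a, T a⟫_𝕂 + 2 * RCLike.re ⟪b, T a⟫_𝕂 + RCLike.re ⟪b, T b⟫_𝕂 := by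
  have hcross : RCLike.re ⟪a, T b⟫_𝕂 = RCLike.re ⟪b, T a⟫_𝕂 := by rw [← hT, inner_re_symm]
  simp only [map_add, inner_add_left, inner_add_right, hcross]
  ring

theorem IsSymmetric.compress {P T : E →ₗ[𝕂] E} (hP : P.IsSymmetric) (hT : T.IsSymmetric) :
    (P ∘ₗ T ∘ₗ P).IsSymmetric := fun a b => by
  simp only [comp_apply, hP _ b, hT _ (P b), hP a]

/-- Cauchy–Schwarz for the positive semidefinite form `⟨x, T y⟩`, in the guise of a
nonpositive discriminant of `t ↦ ⟨x + t T x, T (x + t T x)⟩`. -/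
theorem IsPositive.apply_eq_zero_of_re_inner_eq_zero {T : E →ₗ[𝕂] E} (hT : T.IsPositive)
    {x : E} (hx : RCLike.re ⟪x, T x⟫_𝕂 = 0) : T x = 0 := by
  have hquad : ∀ t : ℝ, 0 ≤ RCLike.re ⟪T x, T (T x)⟫_𝕂 * (t * t) +
      2 * RCLike.re ⟪T x, T x⟫_𝕂 * t + 0 := fun t => by
    have h := hT.re_inner_nonneg_right (x + (t : 𝕂) • T x)
    rw [hT.isSymmetric.re_inner_add_apply_add, hx] at h
    simp only [map_smul, inner_smul_left, inner_smul_right, RCLike.conj_ofReal,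
      RCLike.re_ofReal_mul] at h
    linarith
  have hdisc := discrim_le_zero hquad
  rw [discrim] at hdisc
  exact re_inner_self_nonpos.mp (by nlinarith)

theorem range_le_range_of_ker_adjoint_le [FiniteDimensional 𝕂 E] [FiniteDimensional 𝕂 F]
    [FiniteDimensional 𝕂 G] {A : F →ₗ[𝕂] E} {S : G →ₗ[𝕂] E}
    (h : ker (adjoint S) ≤ ker (adjoint A)) : range A ≤ range S := by
  simpa only [orthogonal_ker, adjoint_adjoint] using Submodule.orthogonal_le h

theorem apply_apply_eq_self_of_mem_range {S B : E →ₗ[𝕂] E} (h : S ∘ₗ B ∘ₗ S = S) {y : E}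
    (hy : y ∈ range S) : S (B y) = y := by
  obtain ⟨s, rfl⟩ := hy
  exact LinearMap.congr_fun h s

theorem apply_mem_range_of_adjoint_comp_eq [FiniteDimensional 𝕂 E] {S B : E →ₗ[𝕂] E}
    (hS : S.IsSymmetric) (h : adjoint (B ∘ₗ S) = B ∘ₗ S) {y : E} (hy : y ∈ range S) :
    B y ∈ range S := by
  obtain ⟨s, rfl⟩ := hy
  have hBS : B ∘ₗ S = S ∘ₗ adjoint B := by rw [← h, adjoint_comp, hS.adjoint_eq]
  exact ⟨adjoint B s, (LinearMap.congr_fun hBS s).symm⟩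

end LinearMap

section SchurComplement

open LinearMap

variable {𝕂 H : Type*} [RCLike 𝕂] [NormedAddCommGroup H] [InnerProductSpace 𝕂 H]
  {P0 P1 X B : H →ₗ[𝕂] H}

theorem re_inner_add_apply_add_eq_add_compress (hP1 : P1.IsSymmetric) (hX : X.IsSymmetric)
    {u v w : H} (hv : P1 v = v) (hw : (P1 ∘ₗ X ∘ₗ P1) w = P1 (X u)) :
    RCLike.re ⟪u + v, X (u + v)⟫_𝕂 = RCLike.re ⟪u, X u⟫_𝕂 -
      RCLike.re ⟪w, (P1 ∘ₗ X ∘ₗ P1) w⟫_𝕂 + RCLike.re ⟪v + w, (P1 ∘ₗ X ∘ₗ P1) (v + w)⟫_𝕂 := by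
  have hXu : ⟪v, X u⟫_𝕂 = ⟪v, (P1 ∘ₗ X ∘ₗ P1) w⟫_𝕂 := by rw [hw, ← hP1, hv]
  have hXv : ⟪v, X v⟫_𝕂 = ⟪v, (P1 ∘ₗ X ∘ₗ P1) v⟫_𝕂 := by
    rw [comp_apply, comp_apply, ← hP1, hv]
  rw [hX.re_inner_add_apply_add, add_comm v w, (hP1.compress hX).re_inner_add_apply_add,
    hXu, hXv]
  ring

theorem isLeast_re_inner_add_apply_add (hP1 : P1.IsSymmetric) (hX : X.IsSymmetric)
    (hpos : ∀ x : H, 0 ≤ RCLike.re ⟪x, (P1 ∘ₗ X ∘ₗ P1) x⟫_𝕂) {u w : H}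
    (hw : (P1 ∘ₗ X ∘ₗ P1) w = P1 (X u)) (hwP1 : P1 w = w) :
    IsLeast {r : ℝ | ∃ v : H, P1 v = v ∧ r = RCLike.re ⟪u + v, X (u + v)⟫_𝕂}
      (RCLike.re ⟪u, X u⟫_𝕂 - RCLike.re ⟪w, (P1 ∘ₗ X ∘ₗ P1) w⟫_𝕂) := by
  have hnegw : P1 (-w) = -w := by rw [map_neg, hwP1]
  refine ⟨⟨-w, hnegw, ?_⟩, ?_⟩
  · rw [re_inner_add_apply_add_eq_add_compress hP1 hX hnegw hw, neg_add_cancel, map_zero,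
      inner_zero_right, map_zero, add_zero]
  · rintro r ⟨v, hv, rfl⟩
    rw [re_inner_add_apply_add_eq_add_compress hP1 hX hv hw]
    linarith [hpos (v + w)]

theorem re_inner_add_apply_add_eq_iff (hP1 : P1.IsSymmetric) (hX : X.IsSymmetric)
    (hpos : ∀ x : H, 0 ≤ RCLike.re ⟪x, (P1 ∘ₗ X ∘ₗ P1) x⟫_𝕂) {u v w : H} (hv : P1 v = v)
    (hw : (P1 ∘ₗ X ∘ₗ P1) w = P1 (X u)) (hwP1 : P1 w = w) :
    RCLike.re ⟪u + v, X (u + v)⟫_𝕂 =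
        RCLike.re ⟪u, X u⟫_𝕂 - RCLike.re ⟪w, (P1 ∘ₗ X ∘ₗ P1) w⟫_𝕂 ↔
      ∃ v₁ : H, P1 v₁ = v₁ ∧ (P1 ∘ₗ X ∘ₗ P1) v₁ = 0 ∧ v = -w + v₁ := by
  have hS : (P1 ∘ₗ X ∘ₗ P1).IsPositive :=
    ⟨hP1.compress hX, fun x => by rw [inner_re_symm]; exact hpos x⟩
  rw [re_inner_add_apply_add_eq_add_compress hP1 hX hv hw, add_eq_left]
  constructor
  · intro h0
    exact ⟨v + w, by rw [map_add, hv, hwP1], hS.apply_eq_zero_of_re_inner_eq_zero h0, by abel⟩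
  · rintro ⟨v₁, -, hv₁, rfl⟩
    rw [neg_add_cancel_comm, hv₁, inner_zero_right, map_zero]

theorem re_inner_gschurLM (hP0 : P0.IsSymmetric) (hP1 : P1.IsSymmetric) (hX : X.IsSymmetric)
    {z : H} (hw : (P1 ∘ₗ X ∘ₗ P1) (B (P1 (X (P0 z)))) = P1 (X (P0 z))) :
    RCLike.re ⟪z, gschurLM P0 P1 X B z⟫_𝕂 = RCLike.re ⟪P0 z, X (P0 z)⟫_𝕂 -
      RCLike.re ⟪B (P1 (X (P0 z))), (P1 ∘ₗ X ∘ₗ P1) (B (P1 (X (P0 z))))⟫_𝕂 := by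
  have hcross : ⟪z, P0 (X (P1 (B (P1 (X (P0 z))))))⟫_𝕂 =
      ⟪(P1 ∘ₗ X ∘ₗ P1) (B (P1 (X (P0 z)))), B (P1 (X (P0 z)))⟫_𝕂 := by
    rw [hw, ← hP0, ← hX, ← hP1]
  simp only [gschurLM, LinearMap.sub_apply, comp_apply, inner_sub_right, map_sub] at hcross ⊢
  rw [← hP0 z, hcross, inner_re_symm _ (B (P1 (X (P0 z))))]

end SchurComplement

theorem stmt_9_general
    {𝕂 : Type*} [RCLike 𝕂]
    {H : Type*} [NormedAddCommGroup H] [InnerProductSpace 𝕂 H] [FiniteDimensional 𝕂 H]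
    (P0 P1 : H →ₗ[𝕂] H)
    (hP0sa : LinearMap.adjoint P0 = P0)
    (hP1 : P1 ∘ₗ P1 = P1) (hP1sa : LinearMap.adjoint P1 = P1)
    (X : H →ₗ[𝕂] H) (hXsa : LinearMap.adjoint X = X)
    (hX11pos : ∀ x : H, 0 ≤ RCLike.re (inner 𝕂 x ((P1 ∘ₗ (X ∘ₗ P1)) x) : 𝕂))
    (hker : LinearMap.ker (P1 ∘ₗ (X ∘ₗ P1)) ≤ LinearMap.ker (P0 ∘ₗ (X ∘ₗ P1)))
    (B : H →ₗ[𝕂] H)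
    (hB2 : (P1 ∘ₗ (X ∘ₗ P1)) ∘ₗ (B ∘ₗ (P1 ∘ₗ (X ∘ₗ P1))) = P1 ∘ₗ (X ∘ₗ P1))
    (hB3 : LinearMap.adjoint (B ∘ₗ (P1 ∘ₗ (X ∘ₗ P1))) = B ∘ₗ (P1 ∘ₗ (X ∘ₗ P1))) :
    (∀ u : H, P0 u = u →
      IsLeast {r : ℝ | ∃ v : H, P1 v = v ∧ r = RCLike.re (inner 𝕂 (u + v) (X (u + v)) : 𝕂)}
        (RCLike.re (inner 𝕂 u (gschurLM P0 P1 X B u) : 𝕂)) ∧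
      (∀ v : H, P1 v = v →
        (RCLike.re (inner 𝕂 (u + v) (X (u + v)) : 𝕂) =
            RCLike.re (inner 𝕂 u (gschurLM P0 P1 X B u) : 𝕂) ↔
          ∃ v₁ : H, P1 v₁ = v₁ ∧ (P1 ∘ₗ (X ∘ₗ P1)) v₁ = 0 ∧
            v = -(B ((P1 ∘ₗ (X ∘ₗ P0)) u)) + v₁))) ∧
    (∀ z : H, RCLike.re (inner 𝕂 z (gschurLM P0 P1 X B z) : 𝕂) ≤
      RCLike.re (inner 𝕂 z ((P0 ∘ₗ (X ∘ₗ P0)) z) : 𝕂)) ∧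
    ((∀ x : H, 0 ≤ RCLike.re (inner 𝕂 x (X x) : 𝕂)) →
      (∀ z : H, 0 ≤ RCLike.re (inner 𝕂 z (gschurLM P0 P1 X B z) : 𝕂)) ∧
      (∀ z : H, RCLike.re (inner 𝕂 z (gschurLM P0 P1 X B z) : 𝕂) ≤
        RCLike.re (inner 𝕂 z ((P0 ∘ₗ (X ∘ₗ P0)) z) : 𝕂))) := by
  have symm_of_adjoint_eq (T : H →ₗ[𝕂] H) (hT : LinearMap.adjoint T = T) : T.IsSymmetric :=
    (T.isSymmetric_iff_isSelfAdjoint).2 (LinearMap.isSelfAdjoint_iff'.2 hT)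
  have hP0s := symm_of_adjoint_eq P0 hP0sa
  have hP1s := symm_of_adjoint_eq P1 hP1sa
  have hXs := symm_of_adjoint_eq X hXsa
  have hSs := hP1s.compress hXs
  have hrange (z : H) : P1 (X (P0 z)) ∈ LinearMap.range (P1 ∘ₗ X ∘ₗ P1) := by
    refine LinearMap.range_le_range_of_ker_adjoint_le (A := P1 ∘ₗ X ∘ₗ P0) ?_ ⟨z, rfl⟩
    simpa only [hSs.adjoint_eq, LinearMap.adjoint_comp, hP0sa, hP1sa, hXsa,
      LinearMap.comp_assoc] using hker
  have hw (z : H) := LinearMap.apply_apply_eq_self_of_mem_range hB2 (hrange z)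
  have hwP1 (z : H) : P1 (B (P1 (X (P0 z)))) = B (P1 (X (P0 z))) := by
    obtain ⟨s, hs⟩ := LinearMap.apply_mem_range_of_adjoint_comp_eq hSs hB3 (hrange z)
    rw [← hs]
    exact LinearMap.congr_fun hP1 _
  have hG (z : H) := re_inner_gschurLM hP0s hP1s hXs (hw z)
  have hle (z : H) : RCLike.re (inner 𝕂 z (gschurLM P0 P1 X B z) : 𝕂) ≤
      RCLike.re (inner 𝕂 z ((P0 ∘ₗ (X ∘ₗ P0)) z) : 𝕂) := by
    rw [hG, show ⟪z, (P0 ∘ₗ X ∘ₗ P0) z⟫_𝕂 = ⟪P0 z, X (P0 z)⟫_𝕂 from (hP0s _ _).symm]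
    linarith [hX11pos (B (P1 (X (P0 z))))]
  refine ⟨fun u hu => ?_, hle, fun hXpos => ⟨fun z => ?_, hle⟩⟩
  · have hwu := hw u
    have hwuP1 := hwP1 u
    rw [hu] at hwu hwuP1
    have hy : (P1 ∘ₗ X ∘ₗ P0) u = P1 (X u) := by
      rw [LinearMap.comp_apply, LinearMap.comp_apply, hu]
    rw [hG, hu, hy]
    exact ⟨isLeast_re_inner_add_apply_add hP1s hXs hX11pos hwu hwuP1,
      fun v hv => re_inner_add_apply_add_eq_iff hP1s hXs hX11pos hv hwu hwuP1⟩
  · obtain ⟨v, -, hv⟩ := (isLeast_re_inner_add_apply_add hP1s hXs hX11pos (hw z) (hwP1 z)).1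
    rw [hG, hv]
    exact hXpos _

/-- Generalized Schur complement minimization principle: for a
self-adjoint operator `X` on a finite-dimensional inner product space `H = H₀ ⊕ H₁`
(orthogonal projections `P0, P1`, blocks `Xᵢⱼ = Pᵢ X Pⱼ`), with `X₁₁ ≥ 0`,
`ker X₁₁ ⊆ ker X₀₁`, and `B = X₁₁⁺` the Moore–Penrose pseudoinverse of `X₁₁`: for every
`u ∈ H₀`, `⟨u, (X/X₁₁)u⟩` is the minimum of `⟨u+v, X(u+v)⟩` over `v ∈ H₁`, the set of
minimizers is `{-X₁₁⁺X₁₀u + v₁ : v₁ ∈ ker X₁₁}`, and `X/X₁₁ ≤ X₀₀`; and if moreover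
`X ≥ 0` then `0 ≤ X/X₁₁ ≤ X₀₀`. -/
theorem stmt_9
    {𝕂 : Type*} [RCLike 𝕂]
    {H : Type*} [NormedAddCommGroup H] [InnerProductSpace 𝕂 H] [FiniteDimensional 𝕂 H]
    (P0 P1 : H →ₗ[𝕂] H)
    (hP0 : P0 ∘ₗ P0 = P0) (hP0sa : LinearMap.adjoint P0 = P0)
    (hP1 : P1 ∘ₗ P1 = P1) (hP1sa : LinearMap.adjoint P1 = P1)
    (hsum : P0 + P1 = 1)
    (X : H →ₗ[𝕂] H) (hXsa : LinearMap.adjoint X = X)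
    (hX11pos : ∀ x : H, 0 ≤ RCLike.re (inner 𝕂 x ((P1 ∘ₗ (X ∘ₗ P1)) x) : 𝕂))
    (hker : LinearMap.ker (P1 ∘ₗ (X ∘ₗ P1)) ≤ LinearMap.ker (P0 ∘ₗ (X ∘ₗ P1)))
    (B : H →ₗ[𝕂] H)
    (hB1 : B ∘ₗ ((P1 ∘ₗ (X ∘ₗ P1)) ∘ₗ B) = B)
    (hB2 : (P1 ∘ₗ (X ∘ₗ P1)) ∘ₗ (B ∘ₗ (P1 ∘ₗ (X ∘ₗ P1))) = P1 ∘ₗ (X ∘ₗ P1))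
    (hB3 : LinearMap.adjoint (B ∘ₗ (P1 ∘ₗ (X ∘ₗ P1))) = B ∘ₗ (P1 ∘ₗ (X ∘ₗ P1)))
    (hB4 : LinearMap.adjoint ((P1 ∘ₗ (X ∘ₗ P1)) ∘ₗ B) = (P1 ∘ₗ (X ∘ₗ P1)) ∘ₗ B) :
    (∀ u : H, P0 u = u →
      IsLeast {r : ℝ | ∃ v : H, P1 v = v ∧ r = RCLike.re (inner 𝕂 (u + v) (X (u + v)) : 𝕂)}
        (RCLike.re (inner 𝕂 u (gschurLM P0 P1 X B u) : 𝕂)) ∧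
      (∀ v : H, P1 v = v →
        (RCLike.re (inner 𝕂 (u + v) (X (u + v)) : 𝕂) =
            RCLike.re (inner 𝕂 u (gschurLM P0 P1 X B u) : 𝕂) ↔
          ∃ v₁ : H, P1 v₁ = v₁ ∧ (P1 ∘ₗ (X ∘ₗ P1)) v₁ = 0 ∧
            v = -(B ((P1 ∘ₗ (X ∘ₗ P0)) u)) + v₁))) ∧
    (∀ z : H, RCLike.re (inner 𝕂 z (gschurLM P0 P1 X B z) : 𝕂) ≤
      RCLike.re (inner 𝕂 z ((P0 ∘ₗ (X ∘ₗ P0)) z) : 𝕂)) ∧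
    ((∀ x : H, 0 ≤ RCLike.re (inner 𝕂 x (X x) : 𝕂)) →
      (∀ z : H, 0 ≤ RCLike.re (inner 𝕂 z (gschurLM P0 P1 X B z) : 𝕂)) ∧
      (∀ z : H, RCLike.re (inner 𝕂 z (gschurLM P0 P1 X B z) : 𝕂) ≤
        RCLike.re (inner 𝕂 z ((P0 ∘ₗ (X ∘ₗ P0)) z) : 𝕂))) :=
  stmt_9_general P0 P1 hP0sa hP1 hP1sa X hXsa hX11pos hker B hB2 hB3
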